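/- Let v ∈ V_{i,j} ≅ W ⊗ W satisfy L_{0,0}·v = L_{1,0}·v = L_{2,0}·v = 0, where the elements L_{α,0} span the subalgebra W of the generalized loop Witt algebra. Then v = 0. -/

import Mathlib

/-
Write `c(γ, δ)` for the coefficient of `L_γ ⊗ L_δ` in `v`. Annihilation by `L_μ` reads
`(γ - 2μ) c(γ - μ, δ) + (δ - 2μ) c(γ, δ - μ) = 0`. For `μ = 0` this confines `v` to the
antidiagonal `δ = -γ`, and there `a(α) := c(α, -α)` satisfies
`(α - μ) a(α) = (α + 2μ) a(α + μ)`.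
Eliminating `a(α + μ)` and `a(α + 2μ)` from these relations for `μ` (at `α` and `α + μ`) and
for `2μ` (at `α`) leaves `12 μ³ a(α) = 0`.
-/

open Finsupp TensorProduct

/-- Bracket of the generalized Witt algebra `[L_α, L_β] = (β−α)L_{α+β}`. -/
noncomputable def bkW {F : Type*} [Field F] (Γ : AddSubgroup F) :
    (Γ →₀ F) →ₗ[F] (Γ →₀ F) →ₗ[F] (Γ →₀ F) :=
  Finsupp.lsum F fun α => LinearMap.toSpanSingleton F _
    (Finsupp.lsum F fun β =>
      (((β : F) - (α : F)) • Finsupp.lsingle (α + β) : F →ₗ[F] _))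

/-- Diagonal adjoint action of `W` on `W ⊗ W`. -/
noncomputable def actW {F : Type*} [Field F] (Γ : AddSubgroup F) (x : Γ →₀ F) :
    ((Γ →₀ F) ⊗[F] (Γ →₀ F)) →ₗ[F] ((Γ →₀ F) ⊗[F] (Γ →₀ F)) :=
  LinearMap.rTensor _ (bkW Γ x) + LinearMap.lTensor _ (bkW Γ x)

noncomputable instance instZeroTensorW {F : Type*} [Field F] (Γ : AddSubgroup F) :
    Zero ((Γ →₀ F) ⊗[F] (Γ →₀ F)) :=
  ⟨(inferInstance : AddCommMonoid ((Γ →₀ F) ⊗[F] (Γ →₀ F))).zero⟩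

namespace WittTensor

variable {F : Type*} [Field F] {Γ : AddSubgroup F}

noncomputable def coeff (γ δ : Γ) : ((Γ →₀ F) ⊗[F] (Γ →₀ F)) →ₗ[F] F :=
  (Finsupp.lapply (γ, δ)).comp (finsuppTensorFinsupp' F Γ Γ).toLinearMap

lemma bkW_single_one_apply (μ γ : Γ) (f : Γ →₀ F) :
    bkW Γ (single μ 1) f γ = ((γ : F) - 2 * μ) * f (γ - μ) := by
  induction f using Finsupp.induction_linear with
  | zero => simp
  | add f g hf hg => simp only [map_add, Finsupp.add_apply, hf, hg, mul_add]
  | single a c =>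
    simp only [bkW, lsum_single, LinearMap.toSpanSingleton_apply, LinearMap.smul_apply,
      lsingle_apply, one_smul, Finsupp.smul_apply, smul_eq_mul]
    rcases eq_or_ne a (γ - μ) with rfl | ha
    · simp only [add_sub_cancel, single_eq_same, AddSubgroup.coe_sub]; ring
    · have hγ : μ + a ≠ γ := fun h => ha (by rw [← h, add_sub_cancel_left])
      rw [single_eq_of_ne' hγ, single_eq_of_ne' ha, mul_zero, mul_zero]

lemma coeff_actW_single_one (μ γ δ : Γ) (v : (Γ →₀ F) ⊗[F] (Γ →₀ F)) :
    coeff γ δ (actW Γ (single μ 1) v) =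
      ((γ : F) - 2 * μ) * coeff (γ - μ) δ v + ((δ : F) - 2 * μ) * coeff γ (δ - μ) v := by
  suffices (coeff γ δ).comp (actW Γ (single μ 1)) =
      ((γ : F) - 2 * μ) • coeff (γ - μ) δ + ((δ : F) - 2 * μ) • coeff γ (δ - μ) from
    LinearMap.congr_fun this v
  ext a b
  simp only [coeff, actW, LinearMap.comp_apply, LinearMap.add_apply, LinearMap.smul_apply,
    AlgebraTensorModule.curry_apply, TensorProduct.curry_apply, LinearMap.coe_restrictScalars,
    LinearMap.rTensor_tmul, LinearMap.lTensor_tmul, map_add, LinearEquiv.coe_coe,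
    finsuppTensorFinsupp'_apply_apply, lapply_apply, bkW_single_one_apply, smul_eq_mul]
  ring

variable {v : (Γ →₀ F) ⊗[F] (Γ →₀ F)}

lemma coeff_relation_of_actW_eq_zero {μ : Γ} (hv : actW Γ (single μ 1) v = 0) (γ δ : Γ) :
    ((γ : F) - 2 * μ) * coeff (γ - μ) δ v + ((δ : F) - 2 * μ) * coeff γ (δ - μ) v =
      0 := by
  rw [← coeff_actW_single_one, hv]
  exact map_zero _

lemma coeff_eq_zero_of_add_ne_zero (h0 : actW Γ (single 0 1) v = 0) {γ δ : Γ}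
    (h : (γ : F) + δ ≠ 0) : coeff γ δ v = 0 := by
  have hrel := coeff_relation_of_actW_eq_zero h0 γ δ
  simp only [ZeroMemClass.coe_zero, mul_zero, sub_zero] at hrel
  exact (mul_eq_zero.mp (by linear_combination hrel)).resolve_left h

lemma coeff_antidiagonal_recurrence {μ : Γ} (hv : actW Γ (single μ 1) v = 0) (α : Γ) :
    ((α : F) - μ) * coeff α (-α) v = ((α : F) + 2 * μ) * coeff (α + μ) (-(α + μ)) v := by
  have hrel := coeff_relation_of_actW_eq_zero hv (α + μ) (-α)
  rw [add_sub_cancel_right, neg_sub_left, add_comm μ] at hrel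
  push_cast at hrel
  linear_combination hrel

lemma coeff_antidiagonal_eq_zero [CharZero F] {μ : Γ} (hμ : μ ≠ 0)
    (h₁ : actW Γ (single μ 1) v = 0) (h₂ : actW Γ (single (μ + μ) 1) v = 0) (α : Γ) :
    coeff α (-α) v = 0 := by
  have r₀ := coeff_antidiagonal_recurrence h₁ α
  have r₁ := coeff_antidiagonal_recurrence h₁ (α + μ)
  have r₂ := coeff_antidiagonal_recurrence h₂ α
  rw [← add_assoc] at r₂
  push_cast at r₀ r₁ r₂
  have hμF : (μ : F) ≠ 0 := by simpa using hμ
  have h12 : (12 * (μ : F) ^ 3) * coeff α (-α) v = 0 := by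
    linear_combination (-(α + 2 * μ) * (α + 3 * μ)) * r₂
      + ((α + 4 * μ) * (α + 2 * μ)) * r₁ + ((α + 4 * μ) * α) * r₀
  exact (mul_eq_zero.mp h12).resolve_left (mul_ne_zero (by norm_num) (pow_ne_zero 3 hμF))

lemma eq_zero_of_coeff_eq_zero (h : ∀ γ δ : Γ, coeff γ δ v = 0) : v = 0 := by
  refine (LinearEquiv.map_eq_zero_iff (finsuppTensorFinsupp' F Γ Γ)).mp ?_
  ext ⟨γ, δ⟩
  exact h γ δ

theorem eq_zero_of_actW_single_eq_zero [CharZero F] {μ : Γ} (hμ : μ ≠ 0)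
    (h0 : actW Γ (single 0 1) v = 0) (h₁ : actW Γ (single μ 1) v = 0)
    (h₂ : actW Γ (single (μ + μ) 1) v = 0) : v = 0 := by
  refine eq_zero_of_coeff_eq_zero fun γ δ => ?_
  by_cases hγδ : (γ : F) + δ = 0
  · obtain rfl : δ = -γ := Subtype.ext (by push_cast; linear_combination hγδ)
    exact coeff_antidiagonal_eq_zero hμ h₁ h₂ γ
  · exact coeff_eq_zero_of_add_ne_zero h0 hγδ

end WittTensor

theorem annihilated_by_L0_L1_L2_eq_zero
    {F : Type*} [Field F] [CharZero F] (Γ : AddSubgroup F) (h1 : (1 : F) ∈ Γ)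
    (v : (Γ →₀ F) ⊗[F] (Γ →₀ F))
    (h0 : actW Γ (Finsupp.single (0 : Γ) (1 : F)) v = 0)
    (hone : actW Γ (Finsupp.single (⟨1, h1⟩ : Γ) (1 : F)) v = 0)
    (htwo : actW Γ (Finsupp.single ((⟨1, h1⟩ : Γ) + ⟨1, h1⟩) (1 : F)) v = 0) :
    v = 0 :=
  WittTensor.eq_zero_of_actW_single_eq_zero (fun h => one_ne_zero (congrArg Subtype.val h))
    h0 hone htwo
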